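/- (Theorem 1, Optimal Constrained Approximation.) Let H_r ∈ ℝ^{L×k_r} have full column rank, H_p ∈ ℝ^{L×k_p} with k_r < k_p ≤ L, W* = (H_rᵀH_r)⁻¹H_rᵀH_p, R = H_p − H_rW* with SVD R = UΣVᵀ, and H_res = R V_res where V_res consists of the first (k_p − k_r) columns of V. Then for every X ∈ ℝ^{L×(k_p−k_r)}, min over A ∈ ℝ^{k_p×k_p} of ‖H_p − [H_r, H_res]A‖_F² ≤ min over A ∈ ℝ^{k_p×k_p} of ‖H_p − [H_r, X]A‖_F²; that is, [H_r, H_res] minimizes the optimal linear reconstruction error of H_p among all L×k_p matrices whose first k_r columns equal H_r. -/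

import Mathlib

open Matrix

/-- Squared Frobenius norm of a real matrix: ‖M‖_F² = trace(MᵀM). -/
noncomputable def frobSq {m n : ℕ} (M : Matrix (Fin m) (Fin n) ℝ) : ℝ :=
  Matrix.trace (Mᵀ * M)

/-- The `L × k` rectangular diagonal matrix with diagonal entries `σ 0, σ 1, …`. -/
noncomputable def rectDiag (L k : ℕ) (σ : ℕ → ℝ) : Matrix (Fin L) (Fin k) ℝ :=
  Matrix.of fun i j => if (i : ℕ) = (j : ℕ) then σ (i : ℕ) else 0

lemma frobSq_eq_sum {m n : ℕ} (M : Matrix (Fin m) (Fin n) ℝ) :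
    frobSq M = ∑ j, ∑ i, (M i j)^2 := by
  simp [frobSq, Matrix.trace, Matrix.mul_apply, sq]

lemma frobSq_nonneg {m n : ℕ} (M : Matrix (Fin m) (Fin n) ℝ) : 0 ≤ frobSq M := by
  rw [frobSq_eq_sum]; positivity

lemma frobSq_transpose {m n : ℕ} (M : Matrix (Fin m) (Fin n) ℝ) :
    frobSq Mᵀ = frobSq M := by
  unfold frobSq
  rw [transpose_transpose, Matrix.trace_mul_comm]

lemma trace_form {m n : ℕ} (M : Matrix (Fin m) (Fin n) ℝ)
    (Q : Matrix (Fin n) (Fin n) ℝ) (hQs : Qᵀ = Q) (hQ2 : Q * Q = Q) :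
    frobSq (M * Q) = Matrix.trace (Mᵀ * M * Q) := by
  unfold frobSq
  rw [transpose_mul, hQs]
  rw [show Q * Mᵀ * (M * Q) = Q * (Mᵀ * M * Q) by
    rw [Matrix.mul_assoc, Matrix.mul_assoc]]
  rw [Matrix.trace_mul_comm, Matrix.mul_assoc, hQ2]

lemma frobSq_mul_idem_le {m n : ℕ} (M : Matrix (Fin m) (Fin n) ℝ)
    (Q : Matrix (Fin n) (Fin n) ℝ) (hQs : Qᵀ = Q) (hQ2 : Q * Q = Q) :
    frobSq (M * Q) ≤ frobSq M := by
  have h1s : (1 - Q)ᵀ = 1 - Q := by rw [transpose_sub, transpose_one, hQs]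
  have h12 : (1 - Q) * (1 - Q) = 1 - Q := by
    simp [mul_sub, sub_mul, hQ2]
  have key : frobSq M = frobSq (M * Q) + frobSq (M * (1 - Q)) := by
    rw [trace_form M Q hQs hQ2, trace_form M (1 - Q) h1s h12]
    rw [← Matrix.trace_add, ← mul_add]
    simp [frobSq]
  have := frobSq_nonneg (M * (1 - Q))
  linarith

lemma frobSq_mul_semiortho_le {m n k : ℕ} (M : Matrix (Fin m) (Fin n) ℝ)
    (Z : Matrix (Fin n) (Fin k) ℝ) (hZ : Zᵀ * Z = 1) :
    frobSq (M * Z) ≤ frobSq M := by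
  have hQs : (Z * Zᵀ)ᵀ = Z * Zᵀ := by rw [transpose_mul, transpose_transpose]
  have hQ2 : (Z * Zᵀ) * (Z * Zᵀ) = Z * Zᵀ := by
    rw [Matrix.mul_assoc, ← Matrix.mul_assoc Zᵀ, hZ, Matrix.one_mul]
  have heq : frobSq (M * (Z * Zᵀ)) = frobSq (M * Z) := by
    rw [trace_form M _ hQs hQ2]
    unfold frobSq
    rw [transpose_mul]
    rw [show Zᵀ * Mᵀ * (M * Z) = Zᵀ * (Mᵀ * M * Z) by
      rw [Matrix.mul_assoc, Matrix.mul_assoc]]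
    rw [Matrix.trace_mul_comm Zᵀ (Mᵀ * M * Z), Matrix.mul_assoc (Mᵀ * M) Z Zᵀ]
  calc frobSq (M * Z) = frobSq (M * (Z * Zᵀ)) := heq.symm
    _ ≤ frobSq M := frobSq_mul_idem_le M _ hQs hQ2

lemma frobSq_idem_mul_le {m n : ℕ} (M : Matrix (Fin m) (Fin n) ℝ)
    (P : Matrix (Fin m) (Fin m) ℝ) (hPs : Pᵀ = P) (hP2 : P * P = P) :
    frobSq (P * M) ≤ frobSq M := by
  rw [← frobSq_transpose (P * M), transpose_mul, hPs, ← frobSq_transpose M]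
  exact frobSq_mul_idem_le Mᵀ P hPs hP2

lemma frobSq_ortho_mul {m n : ℕ} (U : Matrix (Fin m) (Fin m) ℝ) (hU : Uᵀ * U = 1)
    (M : Matrix (Fin m) (Fin n) ℝ) : frobSq (U * M) = frobSq M := by
  unfold frobSq
  rw [transpose_mul, Matrix.mul_assoc, ← Matrix.mul_assoc Uᵀ, hU, Matrix.one_mul]

lemma frobSq_mul_ortho {m n : ℕ} (M : Matrix (Fin m) (Fin n) ℝ)
    (N : Matrix (Fin n) (Fin n) ℝ) (hN : N * Nᵀ = 1) : frobSq (M * N) = frobSq M := by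
  rw [← frobSq_transpose (M * N), transpose_mul, ← frobSq_transpose M]
  exact frobSq_ortho_mul Nᵀ (by rwa [transpose_transpose]) Mᵀ


lemma rectDiag_transpose_mul {L k : ℕ} (hL : k ≤ L) (τ τ' : ℕ → ℝ) :
    (rectDiag L k τ)ᵀ * (rectDiag L k τ') =
      Matrix.diagonal (fun j : Fin k => τ (j : ℕ) * τ' (j : ℕ)) := by
  ext j l
  rw [Matrix.mul_apply, Matrix.diagonal]
  by_cases hjl : j = l
  · subst hjl
    rw [Finset.sum_eq_single (⟨(j : ℕ), lt_of_lt_of_le j.2 hL⟩ : Fin L)]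
    · simp [rectDiag]
    · intro b _ hb
      have : (b : ℕ) ≠ (j : ℕ) := fun h => hb (Fin.ext h)
      simp [rectDiag, transpose_apply, this]
    · simp
  · have hjl' : (j : ℕ) ≠ (l : ℕ) := fun h => hjl (Fin.ext h)
    rw [Finset.sum_eq_zero]
    · simp [of_apply, hjl]
    · intro i _
      simp only [rectDiag, transpose_apply, of_apply]
      split_ifs with h1 h2
      · exact absurd (h1 ▸ h2) hjl'
      · ring
      · ring
      · ring

lemma mul_rectDiag_one {a k l : ℕ} (hkl : l ≤ k) (M : Matrix (Fin a) (Fin k) ℝ) :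
    M * rectDiag k l (fun _ => 1) = M.submatrix id (Fin.castLE hkl) := by
  ext i j
  rw [Matrix.mul_apply]
  rw [Finset.sum_eq_single (Fin.castLE hkl j)]
  · simp [rectDiag]
  · intro b _ hb
    have : (b : ℕ) ≠ (j : ℕ) := fun h => hb (Fin.ext h)
    simp [rectDiag, this]
  · simp

lemma rectDiag_one_mul_transpose {k l : ℕ} (hkl : l ≤ k) :
    rectDiag k l (fun _ => 1) * (rectDiag k l (fun _ => 1))ᵀ =
      Matrix.diagonal (fun i : Fin k => if (i : ℕ) < l then (1:ℝ) else 0) := by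
  ext i j
  rw [Matrix.mul_apply, Matrix.diagonal]
  by_cases hij : i = j
  · subst hij
    by_cases hil : (i : ℕ) < l
    · rw [Finset.sum_eq_single (⟨(i : ℕ), hil⟩ : Fin l)]
      · simp [rectDiag, hil]
      · intro b _ hb
        have : (i : ℕ) ≠ (b : ℕ) := fun h => hb (Fin.ext h.symm)
        simp [rectDiag, this]
      · simp
    · rw [Finset.sum_eq_zero]
      · simp [of_apply, hil]
      · intro b _
        have : (i : ℕ) ≠ (b : ℕ) := fun h => hil (h ▸ b.2)
        simp [rectDiag, this]
  · have hij' : (i : ℕ) ≠ (j : ℕ) := fun h => hij (Fin.ext h)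
    rw [Finset.sum_eq_zero]
    · simp [of_apply, hij]
    · intro b _
      simp only [rectDiag, transpose_apply, of_apply]
      split_ifs with h1 h2
      · exact absurd (h1.symm ▸ h2.symm : (i:ℕ) = (j:ℕ)) hij'
      · ring
      · ring
      · ring

lemma card_filter_lt_fin {n m : ℕ} (hm : m ≤ n) :
    (Finset.univ.filter (fun i : Fin n => (i : ℕ) < m)).card = m := by
  have : Finset.univ.filter (fun i : Fin n => (i : ℕ) < m) =
      Finset.map (Fin.castLEEmb hm) Finset.univ := by
    ext i
    simp only [Finset.mem_filter, Finset.mem_univ, true_and, Finset.mem_map,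
      Fin.castLEEmb_apply]
    constructor
    · intro hi; exact ⟨⟨(i : ℕ), hi⟩, Fin.ext rfl⟩
    · rintro ⟨j, rfl⟩; exact j.2
  rw [this, Finset.card_map, Finset.card_univ, Fintype.card_fin]

lemma rearrange_ineq {n m : ℕ} (hm : m ≤ n) (c q : Fin n → ℝ)
    (hmono : ∀ i j : Fin n, i ≤ j → c j ≤ c i) (hc0 : ∀ i, 0 ≤ c i)
    (hq0 : ∀ i, 0 ≤ q i) (hq1 : ∀ i, q i ≤ 1)
    (hsum : ∑ i, q i = ((n - m : ℕ) : ℝ)) :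
    ∑ i ∈ Finset.univ.filter (fun i : Fin n => ¬ (i : ℕ) < m), c i ≤ ∑ i, c i * q i := by
  rcases eq_or_lt_of_le hm with rfl | hmn
  · rw [Finset.sum_eq_zero (fun i _ => by simp at *)]
    · exact Finset.sum_nonneg fun i _ => mul_nonneg (hc0 i) (hq0 i)
  · set S := Finset.univ.filter (fun i : Fin n => (i : ℕ) < m) with hS
    set T := Finset.univ.filter (fun i : Fin n => ¬ (i : ℕ) < m) with hT
    have hsplit : ∀ f : Fin n → ℝ, ∑ i ∈ S, f i + ∑ i ∈ T, f i = ∑ i, f i := by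
      intro f; exact Finset.sum_filter_add_sum_filter_not _ _ f
    have hcardS : S.card = m := card_filter_lt_fin hm
    have hcardT : T.card = n - m := by
      have := Finset.card_filter_add_card_filter_not
        (s := (Finset.univ : Finset (Fin n))) (p := fun i : Fin n => (i : ℕ) < m)
      rw [Finset.card_univ, Fintype.card_fin] at this
      rw [← hS, ← hT] at this
      omega
    set t : ℝ := c ⟨m, hmn⟩ with ht
    -- key: ∑_T c i * (1 - q i) ≤ ∑_S c i * q i
    have hqT : ∑ i ∈ T, q i + ∑ i ∈ S, q i = ((n - m : ℕ) : ℝ) := by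
      rw [add_comm, hsplit]; exact hsum
    have h1 : ∑ i ∈ T, c i * (1 - q i) ≤ t * ∑ i ∈ S, q i := by
      have step1 : ∑ i ∈ T, c i * (1 - q i) ≤ ∑ i ∈ T, t * (1 - q i) := by
        apply Finset.sum_le_sum
        intro i hi
        have him : m ≤ (i : ℕ) := by
          simp only [hT, Finset.mem_filter] at hi; omega
        have : c i ≤ t := hmono ⟨m, hmn⟩ i him
        nlinarith [hq1 i]
      have step2 : ∑ i ∈ T, t * (1 - q i) = t * ∑ i ∈ S, q i := by
        rw [← Finset.mul_sum]
        congr 1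
        rw [Finset.sum_sub_distrib, Finset.sum_const, hcardT, nsmul_eq_mul, mul_one]
        linarith [hqT]
      linarith
    have h2 : t * ∑ i ∈ S, q i ≤ ∑ i ∈ S, c i * q i := by
      rw [Finset.mul_sum]
      apply Finset.sum_le_sum
      intro i hi
      have him : (i : ℕ) ≤ m := by
        simp only [hS, Finset.mem_filter] at hi; omega
      exact mul_le_mul_of_nonneg_right (hmono i ⟨m, hmn⟩ him) (hq0 i)
    have h3 : ∑ i, c i * q i = ∑ i ∈ S, c i * q i + ∑ i ∈ T, c i * q i :=
      (hsplit _).symm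
    have h4 : ∑ i ∈ T, c i * (1 - q i) = ∑ i ∈ T, c i - ∑ i ∈ T, c i * q i := by
      rw [← Finset.sum_sub_distrib]; congr 1; ext i; ring
    linarith

lemma isUnit_of_rank_eq_card {n : ℕ} (G : Matrix (Fin n) (Fin n) ℝ)
    (h : G.rank = n) : IsUnit G := by
  rw [← Matrix.mulVec_injective_iff_isUnit]
  have : LinearMap.ker G.mulVecLin = ⊥ := by
    have h1 := LinearMap.finrank_range_add_finrank_ker G.mulVecLin
    rw [show LinearMap.range G.mulVecLin = LinearMap.range G.mulVecLin from rfl] at h1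
    have h2 : Module.finrank ℝ (Fin n → ℝ) = n := by simp
    rw [h2] at h1
    have h3 : Module.finrank ℝ (LinearMap.range G.mulVecLin) = n := h
    have h4 : Module.finrank ℝ (LinearMap.ker G.mulVecLin) = 0 := by omega
    exact Submodule.finrank_eq_zero.mp h4
  have hinj : Function.Injective G.mulVecLin := LinearMap.ker_eq_bot.mp this
  exact hinj


lemma exists_semiortho_ker {p q r : ℕ} (hpqr : r + q ≤ p) (A : Matrix (Fin q) (Fin p) ℝ) :
    ∃ Z : Matrix (Fin p) (Fin r) ℝ, Zᵀ * Z = 1 ∧ A * Z = 0 := by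
  let g : EuclideanSpace ℝ (Fin p) →ₗ[ℝ] (Fin q → ℝ) :=
    A.mulVecLin ∘ₗ (EuclideanSpace.equiv (Fin p) ℝ).toLinearEquiv.toLinearMap
  have h1 := LinearMap.finrank_range_add_finrank_ker g
  rw [finrank_euclideanSpace_fin] at h1
  have h2 : Module.finrank ℝ (LinearMap.range g) ≤ q :=
    le_trans (Submodule.finrank_le _) (by simp)
  have hd : r ≤ Module.finrank ℝ (LinearMap.ker g) := by omega
  let b := stdOrthonormalBasis ℝ (LinearMap.ker g)
  refine ⟨Matrix.of (fun i j =>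
      ((b (Fin.castLE hd j) : LinearMap.ker g) : EuclideanSpace ℝ (Fin p)) i), ?_, ?_⟩
  · ext j l
    rw [Matrix.mul_apply]
    have horth := orthonormal_iff_ite.mp b.orthonormal (Fin.castLE hd j) (Fin.castLE hd l)
    rw [Submodule.coe_inner, PiLp.inner_apply] at horth
    simp only [RCLike.inner_apply, starRingEnd_apply, star_trivial] at horth
    simp only [transpose_apply, of_apply, Matrix.one_apply, Fin.castLE_inj] at horth ⊢
    rw [← horth]; exact Finset.sum_congr rfl (fun _ _ => mul_comm _ _)
  · ext i j
    have hker := (b (Fin.castLE hd j)).2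
    rw [LinearMap.mem_ker] at hker
    have hmv : A.mulVec ((b (Fin.castLE hd j) : LinearMap.ker g) : EuclideanSpace ℝ (Fin p)) = 0 := hker
    have := congrFun hmv i
    simpa [Matrix.mul_apply, Matrix.mulVec, dotProduct] using this

/-- Theorem 1 (Optimal Constrained Approximation): `[H_r, H_res]`, with
`H_res = R V_res` built from the top right-singular vectors of the residual
`R = H_p − H_rW*`, minimizes the optimal linear reconstruction error of `H_p`
among all `L × k_p` matrices whose first `k_r` columns equal `H_r`. -/
theorem optimal_constrained_approximation {L kr kp : ℕ}
    (Hr : Matrix (Fin L) (Fin kr) ℝ) (Hp : Matrix (Fin L) (Fin kp) ℝ)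
    (hk : kr < kp) (hL : kp ≤ L) (hrank : Hr.rank = kr)
    (Wstar : Matrix (Fin kr) (Fin kp) ℝ)
    (hW : Wstar = (Hrᵀ * Hr)⁻¹ * Hrᵀ * Hp)
    (R : Matrix (Fin L) (Fin kp) ℝ)
    (hR : R = Hp - Hr * Wstar)
    (U : Matrix (Fin L) (Fin L) ℝ) (V : Matrix (Fin kp) (Fin kp) ℝ) (σ : ℕ → ℝ)
    (hU : Uᵀ * U = 1) (hU' : U * Uᵀ = 1)
    (hV : Vᵀ * V = 1) (hV' : V * Vᵀ = 1)
    (hσ : Antitone σ) (hσ0 : ∀ i, 0 ≤ σ i)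
    (hSVD : R = U * rectDiag L kp σ * Vᵀ)
    (Vres : Matrix (Fin kp) (Fin (kp - kr)) ℝ)
    (hVres : Vres = V.submatrix id (Fin.castLE (Nat.sub_le kp kr)))
    (Hres : Matrix (Fin L) (Fin (kp - kr)) ℝ)
    (hHres : Hres = R * Vres)
    (X : Matrix (Fin L) (Fin (kp - kr)) ℝ) :
    sInf (Set.range fun A : Matrix (Fin kr ⊕ Fin (kp - kr)) (Fin kp) ℝ =>
        frobSq (Hp - fromCols Hr Hres * A)) ≤
      sInf (Set.range fun A : Matrix (Fin kr ⊕ Fin (kp - kr)) (Fin kp) ℝ =>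
        frobSq (Hp - fromCols Hr X * A)) := by
  set D := rectDiag L kp σ with hD
  set E := rectDiag kp (kp - kr) (fun _ => 1) with hE
  set D₂ := rectDiag L kp (fun i => if i < kp - kr then 0 else σ i) with hD2
  set tailSum := ∑ j : Fin kp, (if (j : ℕ) < kp - kr then (0:ℝ) else σ (j : ℕ))^2 with htail
  have hVE : Vres = V * E := by
    rw [hVres, hE, mul_rectDiag_one (Nat.sub_le kp kr) V]
  -- Step A : the value attained by A₀
  have hRV : R * Vres = U * (D * E) := by
    rw [hSVD, hVE]
    simp only [Matrix.mul_assoc]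
    rw [← Matrix.mul_assoc Vᵀ V E, hV, Matrix.one_mul]
  have hEE : E * Eᵀ = Matrix.diagonal (fun i : Fin kp => if (i : ℕ) < kp - kr then (1:ℝ) else 0) :=
    rectDiag_one_mul_transpose (Nat.sub_le kp kr)
  have hDD : D - D * Matrix.diagonal (fun i : Fin kp => if (i : ℕ) < kp - kr then (1:ℝ) else 0)
      = D₂ := by
    ext i j
    simp only [Matrix.sub_apply, Matrix.mul_diagonal, hD, hD2, rectDiag, of_apply]
    split_ifs <;> (try ring) <;> omega
  have hHVV : Hres * Vresᵀ = U * (D * (E * Eᵀ)) * Vᵀ := by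
    rw [hHres, hRV, hVE, transpose_mul]
    simp only [Matrix.mul_assoc]
  have hmain : Hp - fromCols Hr Hres * (fromRows Wstar Vresᵀ) = U * D₂ * Vᵀ := by
    rw [fromCols_mul_fromRows, sub_add_eq_sub_sub, ← hR, hHVV, hSVD, hEE]
    rw [show U * D * Vᵀ - U * (D * Matrix.diagonal
          (fun i : Fin kp => if (i : ℕ) < kp - kr then (1:ℝ) else 0)) * Vᵀ
        = U * (D - D * Matrix.diagonal
          (fun i : Fin kp => if (i : ℕ) < kp - kr then (1:ℝ) else 0)) * Vᵀ by
      rw [Matrix.mul_sub, Matrix.sub_mul]]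
    rw [hDD]
  have htailval : frobSq (U * D₂ * Vᵀ) = tailSum := by
    rw [Matrix.mul_assoc, frobSq_ortho_mul U hU,
      frobSq_mul_ortho D₂ Vᵀ (by rw [transpose_transpose, hV])]
    rw [show frobSq D₂ = Matrix.trace (D₂ᵀ * D₂) from rfl, hD2,
      rectDiag_transpose_mul hL, Matrix.trace_diagonal]
    apply Finset.sum_congr rfl
    intro j _
    split_ifs <;> ring
  -- bounds on sInf
  have hbdd1 : BddBelow (Set.range fun A : Matrix (Fin kr ⊕ Fin (kp - kr)) (Fin kp) ℝ =>
      frobSq (Hp - fromCols Hr Hres * A)) := by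
    refine ⟨0, ?_⟩
    rintro y ⟨A, rfl⟩
    exact frobSq_nonneg _
  have hLHS : sInf (Set.range fun A : Matrix (Fin kr ⊕ Fin (kp - kr)) (Fin kp) ℝ =>
      frobSq (Hp - fromCols Hr Hres * A)) ≤ tailSum := by
    apply csInf_le hbdd1
    refine ⟨fromRows Wstar Vresᵀ, ?_⟩
    show frobSq (Hp - fromCols Hr Hres * fromRows Wstar Vresᵀ) = tailSum
    rw [hmain, htailval]
  -- Step B : lower bound for arbitrary A and X
  have hstepB : ∀ A : Matrix (Fin kr ⊕ Fin (kp - kr)) (Fin kp) ℝ,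
      tailSum ≤ frobSq (Hp - fromCols Hr X * A) := by
    intro A
    set A₁ := toRows₁ A with hA1
    set A₂ := toRows₂ A with hA2
    have hsplitA : fromCols Hr X * A = Hr * A₁ + X * A₂ := by
      conv_lhs => rw [← fromRows_toRows A]
      rw [fromCols_mul_fromRows]
    have hGu : IsUnit (Hrᵀ * Hr) := by
      apply isUnit_of_rank_eq_card
      rw [Matrix.rank_transpose_mul_self, hrank]
    have hGdet : IsUnit (Hrᵀ * Hr).det := (Matrix.isUnit_iff_isUnit_det _).mp hGu
    have hGinv : (Hrᵀ * Hr)⁻¹ * (Hrᵀ * Hr) = 1 := Matrix.nonsing_inv_mul _ hGdet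
    have hGsym : (Hrᵀ * Hr)ᵀ = Hrᵀ * Hr := by rw [transpose_mul, transpose_transpose]
    have hGinvsym : ((Hrᵀ * Hr)⁻¹)ᵀ = (Hrᵀ * Hr)⁻¹ := by
      rw [Matrix.transpose_nonsing_inv, hGsym]
    set P := 1 - Hr * (Hrᵀ * Hr)⁻¹ * Hrᵀ with hPdef
    have hPs : Pᵀ = P := by
      rw [hPdef, transpose_sub, transpose_one, transpose_mul, transpose_mul,
        transpose_transpose, hGinvsym, Matrix.mul_assoc]
    have hPHr : P * Hr = 0 := by
      rw [hPdef, Matrix.sub_mul, Matrix.one_mul,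
        Matrix.mul_assoc (Hr * (Hrᵀ * Hr)⁻¹) Hrᵀ Hr,
        Matrix.mul_assoc Hr (Hrᵀ * Hr)⁻¹ (Hrᵀ * Hr), hGinv, Matrix.mul_one, sub_self]
    have hP2 : P * P = P := by
      nth_rewrite 2 [hPdef]
      rw [Matrix.mul_sub, Matrix.mul_one]
      rw [show P * (Hr * (Hrᵀ * Hr)⁻¹ * Hrᵀ) = (P * Hr) * ((Hrᵀ * Hr)⁻¹ * Hrᵀ) by
        simp only [Matrix.mul_assoc]]
      rw [hPHr, Matrix.zero_mul, sub_zero]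
    have hPHp : P * Hp = R := by
      rw [hPdef, Matrix.sub_mul, Matrix.one_mul, hR, hW]
      simp only [Matrix.mul_assoc]
    obtain ⟨Z, hZZ, hAZ⟩ := exists_semiortho_ker
      (p := kp) (q := kp - kr) (r := kr) (by omega) A₂
    set W := Vᵀ * Z with hWdef
    have hWW : Wᵀ * W = 1 := by
      rw [hWdef, transpose_mul, transpose_transpose, Matrix.mul_assoc,
        ← Matrix.mul_assoc V Vᵀ Z, hV', Matrix.one_mul, hZZ]
    -- the quadratic form value
    have htrace : frobSq (D * W) =
        ∑ j : Fin kp, (σ (j : ℕ) * σ (j : ℕ)) * (W * Wᵀ) j j := by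
      rw [show frobSq (D * W) = Matrix.trace ((D * W)ᵀ * (D * W)) from rfl, transpose_mul]
      rw [show Wᵀ * Dᵀ * (D * W) = Wᵀ * ((Dᵀ * D) * W) by simp only [Matrix.mul_assoc]]
      rw [hD, rectDiag_transpose_mul hL σ σ, Matrix.trace_mul_comm, Matrix.mul_assoc]
      simp [Matrix.trace, Matrix.diagonal_mul, Matrix.diag]
    have hq0 : ∀ j : Fin kp, 0 ≤ (W * Wᵀ) j j := by
      intro j
      have : (W * Wᵀ) j j = ∑ k, (W j k)^2 := by
        simp [Matrix.mul_apply, Matrix.transpose_apply, sq]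
      rw [this]
      positivity
    have hWWW : (W * Wᵀ) * (W * Wᵀ) = W * Wᵀ := by
      rw [Matrix.mul_assoc, ← Matrix.mul_assoc Wᵀ W Wᵀ, hWW, Matrix.one_mul]
    have hq1 : ∀ j : Fin kp, (W * Wᵀ) j j ≤ 1 := by
      intro j
      set N : Matrix (Fin kp) (Fin kp) ℝ := 1 - W * Wᵀ with hNdef
      have hNs : Nᵀ = N := by
        rw [hNdef, transpose_sub, transpose_one, transpose_mul, transpose_transpose]
      have hN2 : N * N = N := by
        rw [hNdef]; simp [mul_sub, sub_mul, hWWW]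
      have hdiag : 0 ≤ N j j := by
        have h1 : N j j = (N * N) j j := by rw [hN2]
        have h2 : (N * N) j j = ∑ k, (N j k)^2 := by
          rw [Matrix.mul_apply]
          apply Finset.sum_congr rfl
          intro k _
          have := congrFun (congrFun hNs j) k
          rw [Matrix.transpose_apply] at this
          rw [← this, sq]
        rw [h1, h2]
        positivity
      have h3 : N j j = 1 - (W * Wᵀ) j j := by
        rw [hNdef]; simp [Matrix.sub_apply, Matrix.one_apply]
      rw [h3] at hdiag
      linarith
    have hqsum : ∑ j : Fin kp, (W * Wᵀ) j j = (kr : ℝ) := by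
      have : ∑ j : Fin kp, (W * Wᵀ) j j = Matrix.trace (W * Wᵀ) := rfl
      rw [this, Matrix.trace_mul_comm, hWW, Matrix.trace_one]
      simp
    -- rearrangement
    have hrearr := rearrange_ineq (Nat.sub_le kp kr)
      (fun j : Fin kp => (σ (j : ℕ))^2) (fun j : Fin kp => (W * Wᵀ) j j)
      (fun i j hij => by
        have : σ (j : ℕ) ≤ σ (i : ℕ) := hσ (by exact_mod_cast hij)
        exact pow_le_pow_left₀ (hσ0 _) this 2)
      (fun i => by positivity) hq0 hq1
      (by
        have hkk : kp - (kp - kr) = kr := by omega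
        rw [hkk, hqsum])
    have htail2 : tailSum = ∑ i ∈ Finset.univ.filter
        (fun i : Fin kp => ¬ (i : ℕ) < kp - kr), (σ (i : ℕ))^2 := by
      rw [htail, Finset.sum_filter]
      apply Finset.sum_congr rfl
      intro j _
      by_cases h : (j : ℕ) < kp - kr <;> simp [h]
    -- chain of inequalities
    have c1 : tailSum ≤ frobSq (D * W) := by
      rw [htail2, htrace]
      refine le_trans hrearr ?_
      apply le_of_eq
      apply Finset.sum_congr rfl
      intro j _
      ring
    have c2 : frobSq (D * W) = frobSq (R * Z) := by
      rw [show R * Z = U * (D * W) by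
        rw [hSVD, hWdef]; simp only [Matrix.mul_assoc]]
      rw [frobSq_ortho_mul U hU]
    have c3 : R * Z = (R - (P * X) * A₂) * Z := by
      rw [Matrix.sub_mul, Matrix.mul_assoc (P * X) A₂ Z, hAZ, Matrix.mul_zero, sub_zero]
    have c4 : frobSq ((R - (P * X) * A₂) * Z) ≤ frobSq (R - (P * X) * A₂) :=
      frobSq_mul_semiortho_le _ Z hZZ
    have c5 : P * (Hp - fromCols Hr X * A) = R - (P * X) * A₂ := by
      rw [hsplitA, Matrix.mul_sub, Matrix.mul_add, hPHp,
        ← Matrix.mul_assoc P Hr A₁, hPHr, Matrix.zero_mul, zero_add,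
        ← Matrix.mul_assoc P X A₂]
    have c6 : frobSq (P * (Hp - fromCols Hr X * A))
        ≤ frobSq (Hp - fromCols Hr X * A) :=
      frobSq_idem_mul_le _ P hPs hP2
    calc tailSum ≤ frobSq (D * W) := c1
      _ = frobSq ((R - (P * X) * A₂) * Z) := by rw [c2, c3]
      _ ≤ frobSq (R - (P * X) * A₂) := c4
      _ = frobSq (P * (Hp - fromCols Hr X * A)) := by rw [c5]
      _ ≤ frobSq (Hp - fromCols Hr X * A) := c6
  have hRHS : tailSum ≤ sInf (Set.range fun A : Matrix (Fin kr ⊕ Fin (kp - kr)) (Fin kp) ℝ =>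
      frobSq (Hp - fromCols Hr X * A)) := by
    apply le_csInf (Set.range_nonempty _)
    rintro b ⟨A, rfl⟩
    exact hstepB A
  exact le_trans hLHS hRHS
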